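/- arXiv:2204.13063 — 6 statements merged into one kernel-verified Lean document; each statement's English description precedes it below -/
import Mathlib

section
/- Let q : ℝ² → ℝ be a smooth function of (t₁, t₂) and suppose there exists a smooth r : ℝ² → ℝ (playing the role of q̄) and s : ℝ² → ℝ (playing the role of q̲) such that exp(r − q) = (1/2)(q₂ + q₁₁ − q₁²), exp(q − s) = (1/2)(q₂ − q₁₁ − q₁²), and exp(r − q) = (1/2)(r₂ − r₁₁ − r₁²), exp(q − s) = (1/2)(s₂ + s₁₁ − s₁²). Then q satisfies the Boussinesq-type PDE (1/2)q₂₂ − q₁₁q₂ − 2q₁₂q₁ − (1/2)q₁₁₁₁ + 3q₁²q₁₁ = 0. -/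
noncomputable def pd1 (f : ℝ → ℝ → ℝ) : ℝ → ℝ → ℝ :=
  fun t1 t2 => deriv (fun s => f s t2) t1

noncomputable def pd2 (f : ℝ → ℝ → ℝ) : ℝ → ℝ → ℝ :=
  fun t1 t2 => deriv (fun s => f t1 s) t2

namespace TodaAux

abbrev P (f : ℝ → ℝ → ℝ) : ℝ × ℝ → ℝ := fun p => f p.1 p.2

lemma slice1 {f : ℝ → ℝ → ℝ} (hf : ContDiff ℝ (⊤ : ℕ∞) (P f)) (t2 : ℝ) :
    ContDiff ℝ (⊤ : ℕ∞) fun u => f u t2 := hf.comp (contDiff_id.prodMk contDiff_const)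

lemma slice2 {f : ℝ → ℝ → ℝ} (hf : ContDiff ℝ (⊤ : ℕ∞) (P f)) (t1 : ℝ) :
    ContDiff ℝ (⊤ : ℕ∞) fun v => f t1 v := hf.comp (contDiff_const.prodMk contDiff_id)

lemma hd1 {f : ℝ → ℝ → ℝ} (hf : ContDiff ℝ (⊤ : ℕ∞) (P f)) (t1 t2 : ℝ) :
    HasDerivAt (fun u => f u t2) (pd1 f t1 t2) t1 :=
  ((slice1 hf t2).differentiable (by simp) t1).hasDerivAt

lemma hd2 {f : ℝ → ℝ → ℝ} (hf : ContDiff ℝ (⊤ : ℕ∞) (P f)) (t1 t2 : ℝ) :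
    HasDerivAt (fun v => f t1 v) (pd2 f t1 t2) t2 :=
  ((slice2 hf t1).differentiable (by simp) t2).hasDerivAt

lemma line1 (t1 t2 : ℝ) : HasDerivAt (fun u : ℝ => (u, t2)) ((1 : ℝ), (0 : ℝ)) t1 :=
  (hasDerivAt_id t1).prodMk (hasDerivAt_const t1 t2)

lemma line2 (t1 t2 : ℝ) : HasDerivAt (fun v : ℝ => (t1, v)) ((0 : ℝ), (1 : ℝ)) t2 :=
  (hasDerivAt_const t2 t1).prodMk (hasDerivAt_id t2)

lemma pd1_fderiv {f : ℝ → ℝ → ℝ} (hf : ContDiff ℝ (⊤ : ℕ∞) (P f)) (t1 t2 : ℝ) :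
    pd1 f t1 t2 = fderiv ℝ (P f) (t1, t2) (1, 0) := by
  have h := ((hf.differentiable (by simp) (t1, t2)).hasFDerivAt).comp_hasDerivAt t1 (line1 t1 t2)
  exact h.deriv

lemma pd2_fderiv {f : ℝ → ℝ → ℝ} (hf : ContDiff ℝ (⊤ : ℕ∞) (P f)) (t1 t2 : ℝ) :
    pd2 f t1 t2 = fderiv ℝ (P f) (t1, t2) (0, 1) := by
  have h := ((hf.differentiable (by simp) (t1, t2)).hasFDerivAt).comp_hasDerivAt t2 (line2 t1 t2)
  exact h.deriv

lemma contDiff_pd1 {f : ℝ → ℝ → ℝ} (hf : ContDiff ℝ (⊤ : ℕ∞) (P f)) :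
    ContDiff ℝ (⊤ : ℕ∞) (P (pd1 f)) := by
  have h : P (pd1 f) = fun p : ℝ × ℝ => fderiv ℝ (P f) p (1, 0) := by
    funext p; exact pd1_fderiv hf p.1 p.2
  rw [h]
  exact (hf.fderiv_right (by simp)).clm_apply contDiff_const

lemma contDiff_pd2 {f : ℝ → ℝ → ℝ} (hf : ContDiff ℝ (⊤ : ℕ∞) (P f)) :
    ContDiff ℝ (⊤ : ℕ∞) (P (pd2 f)) := by
  have h : P (pd2 f) = fun p : ℝ × ℝ => fderiv ℝ (P f) p (0, 1) := by
    funext p; exact pd2_fderiv hf p.1 p.2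
  rw [h]
  exact (hf.fderiv_right (by simp)).clm_apply contDiff_const

lemma pd_comm {f : ℝ → ℝ → ℝ} (hf : ContDiff ℝ (⊤ : ℕ∞) (P f)) (t1 t2 : ℝ) :
    pd1 (pd2 f) t1 t2 = pd2 (pd1 f) t1 t2 := by
  have hder : ∀ p : ℝ × ℝ, HasFDerivAt (P f) (fderiv ℝ (P f) p) p := fun p =>
    (hf.differentiable (by simp) p).hasFDerivAt
  have h2 : HasFDerivAt (fderiv ℝ (P f)) (fderiv ℝ (fderiv ℝ (P f)) (t1, t2)) (t1, t2) :=
    ((hf.fderiv_right (m := (⊤ : ℕ∞)) (by simp)).differentiable (by simp) (t1, t2)).hasFDerivAt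
  have hsymm := second_derivative_symmetric hder h2 ((1 : ℝ), (0 : ℝ)) ((0 : ℝ), (1 : ℝ))
  have hc1 : HasDerivAt (fun u : ℝ => fderiv ℝ (P f) (u, t2))
      (fderiv ℝ (fderiv ℝ (P f)) (t1, t2) (1, 0)) t1 :=
    h2.comp_hasDerivAt t1 (line1 t1 t2)
  have hc2 : HasDerivAt (fun v : ℝ => fderiv ℝ (P f) (t1, v))
      (fderiv ℝ (fderiv ℝ (P f)) (t1, t2) (0, 1)) t2 :=
    h2.comp_hasDerivAt t2 (line2 t1 t2)
  have e1 : pd1 (pd2 f) t1 t2 = fderiv ℝ (fderiv ℝ (P f)) (t1, t2) (1, 0) (0, 1) := by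
    have h := hc1.clm_apply (hasDerivAt_const t1 ((0 : ℝ), (1 : ℝ)))
    have hfun : (fun u : ℝ => fderiv ℝ (P f) (u, t2) (0, 1)) = fun u => pd2 f u t2 := by
      funext u; exact (pd2_fderiv hf u t2).symm
    rw [hfun] at h
    simpa [pd1] using h.deriv
  have e2 : pd2 (pd1 f) t1 t2 = fderiv ℝ (fderiv ℝ (P f)) (t1, t2) (0, 1) (1, 0) := by
    have h := hc2.clm_apply (hasDerivAt_const t2 ((1 : ℝ), (0 : ℝ)))
    have hfun : (fun v : ℝ => fderiv ℝ (P f) (t1, v) (1, 0)) = fun v => pd1 f t1 v := by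
      funext v; exact (pd1_fderiv hf t1 v).symm
    rw [hfun] at h
    simpa [pd2] using h.deriv
  rw [e1, e2, hsymm]


variable {v w : ℝ → ℝ → ℝ}

lemma contDiff_E (hv : ContDiff ℝ (⊤ : ℕ∞) (P v)) (hw : ContDiff ℝ (⊤ : ℕ∞) (P w)) :
    ContDiff ℝ (⊤ : ℕ∞) (P (fun a b => Real.exp (v a b - w a b))) :=
  Real.contDiff_exp.comp (hv.sub hw)

lemma chain1 (hv : ContDiff ℝ (⊤ : ℕ∞) (P v)) (hw : ContDiff ℝ (⊤ : ℕ∞) (P w)) (t1 t2 : ℝ) :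
    pd1 (fun a b => Real.exp (v a b - w a b)) t1 t2
      = Real.exp (v t1 t2 - w t1 t2) * (pd1 v t1 t2 - pd1 w t1 t2) :=
  (((hd1 hv t1 t2).sub (hd1 hw t1 t2)).exp).deriv

lemma chain2 (hv : ContDiff ℝ (⊤ : ℕ∞) (P v)) (hw : ContDiff ℝ (⊤ : ℕ∞) (P w)) (t1 t2 : ℝ) :
    pd2 (fun a b => Real.exp (v a b - w a b)) t1 t2
      = Real.exp (v t1 t2 - w t1 t2) * (pd2 v t1 t2 - pd2 w t1 t2) :=
  (((hd2 hv t1 t2).sub (hd2 hw t1 t2)).exp).deriv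

lemma chain11 (hv : ContDiff ℝ (⊤ : ℕ∞) (P v)) (hw : ContDiff ℝ (⊤ : ℕ∞) (P w)) (t1 t2 : ℝ) :
    pd1 (pd1 (fun a b => Real.exp (v a b - w a b))) t1 t2
      = Real.exp (v t1 t2 - w t1 t2) * (pd1 v t1 t2 - pd1 w t1 t2) ^ 2
        + Real.exp (v t1 t2 - w t1 t2) * (pd1 (pd1 v) t1 t2 - pd1 (pd1 w) t1 t2) := by
  have hfun : (fun u => pd1 (fun a b => Real.exp (v a b - w a b)) u t2)
      = fun u => Real.exp (v u t2 - w u t2) * (pd1 v u t2 - pd1 w u t2) :=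
    funext fun u => chain1 hv hw u t2
  have hder : HasDerivAt (fun u => Real.exp (v u t2 - w u t2) * (pd1 v u t2 - pd1 w u t2))
      (Real.exp (v t1 t2 - w t1 t2) * (pd1 v t1 t2 - pd1 w t1 t2) * (pd1 v t1 t2 - pd1 w t1 t2)
        + Real.exp (v t1 t2 - w t1 t2) * (pd1 (pd1 v) t1 t2 - pd1 (pd1 w) t1 t2)) t1 :=
    (((hd1 hv t1 t2).sub (hd1 hw t1 t2)).exp).mul
      ((hd1 (contDiff_pd1 hv) t1 t2).sub (hd1 (contDiff_pd1 hw) t1 t2))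
  show deriv (fun u => pd1 (fun a b => Real.exp (v a b - w a b)) u t2) t1 = _
  rw [hfun, hder.deriv]; ring

/-- Both forms of the key intermediate identity. -/
lemma key (hv : ContDiff ℝ (⊤ : ℕ∞) (P v)) (hw : ContDiff ℝ (⊤ : ℕ∞) (P w))
    (hlow : ∀ a b, Real.exp (v a b - w a b)
      = (1 / 2) * (pd2 w a b + pd1 (pd1 w) a b - (pd1 w a b) ^ 2))
    (hup : ∀ a b, Real.exp (v a b - w a b)
      = (1 / 2) * (pd2 v a b - pd1 (pd1 v) a b - (pd1 v a b) ^ 2)) (a b : ℝ) :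
    (pd2 (fun a b => Real.exp (v a b - w a b)) a b
      = 2 * Real.exp (v a b - w a b) * pd1 (pd1 w) a b
        + pd1 (pd1 (fun a b => Real.exp (v a b - w a b))) a b
        + 2 * pd1 w a b * pd1 (fun a b => Real.exp (v a b - w a b)) a b)
    ∧ (pd2 (fun a b => Real.exp (v a b - w a b)) a b
      = 2 * Real.exp (v a b - w a b) * pd1 (pd1 v) a b
        - pd1 (pd1 (fun a b => Real.exp (v a b - w a b))) a b
        + 2 * pd1 v a b * pd1 (fun a b => Real.exp (v a b - w a b)) a b) := by
  have c1 := chain1 hv hw a b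
  have c2 := chain2 hv hw a b
  have c11 := chain11 hv hw a b
  constructor
  · linear_combination c2 - c11 - 2 * pd1 w a b * c1
      - 2 * Real.exp (v a b - w a b) * (hup a b) + 2 * Real.exp (v a b - w a b) * (hlow a b)
  · linear_combination c2 + c11 - 2 * pd1 v a b * c1
      - 2 * Real.exp (v a b - w a b) * (hup a b) + 2 * Real.exp (v a b - w a b) * (hlow a b)

section derivG
variable {g E : ℝ → ℝ → ℝ} {ε : ℝ}

lemma derivG1 (hg : ContDiff ℝ (⊤ : ℕ∞) (P g))
    (hE : ∀ a b, E a b = (1 / 2) * (pd2 g a b + ε * pd1 (pd1 g) a b - (pd1 g a b) ^ 2))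
    (t1 t2 : ℝ) :
    pd1 E t1 t2 = (1 / 2) * (pd1 (pd2 g) t1 t2 + ε * pd1 (pd1 (pd1 g)) t1 t2
      - 2 * pd1 g t1 t2 * pd1 (pd1 g) t1 t2) := by
  have hfun : (fun u => E u t2)
      = fun u => (1 / 2) * (pd2 g u t2 + ε * pd1 (pd1 g) u t2 - (pd1 g u t2) ^ 2) :=
    funext fun u => hE u t2
  have hder : HasDerivAt
      (fun u => (1 / 2) * (pd2 g u t2 + ε * pd1 (pd1 g) u t2 - (pd1 g u t2) ^ 2))
      ((1 / 2) * ((pd1 (pd2 g) t1 t2 + ε * pd1 (pd1 (pd1 g)) t1 t2)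
        - 2 * pd1 g t1 t2 ^ 1 * pd1 (pd1 g) t1 t2)) t1 :=
    (((hd1 (contDiff_pd2 hg) t1 t2).add
        ((hd1 (contDiff_pd1 (contDiff_pd1 hg)) t1 t2).const_mul ε)).sub
      ((hd1 (contDiff_pd1 hg) t1 t2).pow 2)).const_mul (1 / 2)
  show deriv (fun u => E u t2) t1 = _
  rw [hfun, hder.deriv]; ring

lemma derivG2 (hg : ContDiff ℝ (⊤ : ℕ∞) (P g))
    (hE : ∀ a b, E a b = (1 / 2) * (pd2 g a b + ε * pd1 (pd1 g) a b - (pd1 g a b) ^ 2))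
    (t1 t2 : ℝ) :
    pd2 E t1 t2 = (1 / 2) * (pd2 (pd2 g) t1 t2 + ε * pd2 (pd1 (pd1 g)) t1 t2
      - 2 * pd1 g t1 t2 * pd2 (pd1 g) t1 t2) := by
  have hfun : (fun u => E t1 u)
      = fun u => (1 / 2) * (pd2 g t1 u + ε * pd1 (pd1 g) t1 u - (pd1 g t1 u) ^ 2) :=
    funext fun u => hE t1 u
  have hder : HasDerivAt
      (fun u => (1 / 2) * (pd2 g t1 u + ε * pd1 (pd1 g) t1 u - (pd1 g t1 u) ^ 2))
      ((1 / 2) * ((pd2 (pd2 g) t1 t2 + ε * pd2 (pd1 (pd1 g)) t1 t2)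
        - 2 * pd1 g t1 t2 ^ 1 * pd2 (pd1 g) t1 t2)) t2 :=
    (((hd2 (contDiff_pd2 hg) t1 t2).add
        ((hd2 (contDiff_pd1 (contDiff_pd1 hg)) t1 t2).const_mul ε)).sub
      ((hd2 (contDiff_pd1 hg) t1 t2).pow 2)).const_mul (1 / 2)
  show deriv (fun u => E t1 u) t2 = _
  rw [hfun, hder.deriv]; ring

lemma derivG11 (hg : ContDiff ℝ (⊤ : ℕ∞) (P g))
    (hE : ∀ a b, E a b = (1 / 2) * (pd2 g a b + ε * pd1 (pd1 g) a b - (pd1 g a b) ^ 2))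
    (t1 t2 : ℝ) :
    pd1 (pd1 E) t1 t2 = (1 / 2) * (pd1 (pd1 (pd2 g)) t1 t2
      + ε * pd1 (pd1 (pd1 (pd1 g))) t1 t2
      - 2 * (pd1 (pd1 g) t1 t2) ^ 2 - 2 * pd1 g t1 t2 * pd1 (pd1 (pd1 g)) t1 t2) := by
  have hE1 : ∀ a b, pd1 E a b = (1 / 2) * (pd1 (pd2 g) a b + ε * pd1 (pd1 (pd1 g)) a b
      - 2 * pd1 g a b * pd1 (pd1 g) a b) := fun a b => derivG1 hg hE a b
  have hfun : (fun u => pd1 E u t2)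
      = fun u => (1 / 2) * (pd1 (pd2 g) u t2 + ε * pd1 (pd1 (pd1 g)) u t2
          - 2 * (pd1 g u t2 * pd1 (pd1 g) u t2)) :=
    funext fun u => by rw [hE1 u t2]; ring
  have hder : HasDerivAt
      (fun u => (1 / 2) * (pd1 (pd2 g) u t2 + ε * pd1 (pd1 (pd1 g)) u t2
          - 2 * (pd1 g u t2 * pd1 (pd1 g) u t2)))
      ((1 / 2) * ((pd1 (pd1 (pd2 g)) t1 t2 + ε * pd1 (pd1 (pd1 (pd1 g))) t1 t2)
        - (2 * (pd1 (pd1 g) t1 t2 * pd1 (pd1 g) t1 t2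
            + pd1 g t1 t2 * pd1 (pd1 (pd1 g)) t1 t2)))) t1 :=
    (((hd1 (contDiff_pd1 (contDiff_pd2 hg)) t1 t2).add
        ((hd1 (contDiff_pd1 (contDiff_pd1 (contDiff_pd1 hg))) t1 t2).const_mul ε)).sub
      (((hd1 (contDiff_pd1 hg) t1 t2).mul
          (hd1 (contDiff_pd1 (contDiff_pd1 hg)) t1 t2)).const_mul 2)).const_mul (1 / 2)
  show deriv (fun u => pd1 E u t2) t1 = _
  rw [hfun, hder.deriv]; ring

end derivG

end TodaAux

/-- If q, together with neighbours r (= q̄) and s (= q̲), satisfies the Toda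
relations from both sides, then q satisfies the Boussinesq-type PDE
½q₂₂ − q₁₁q₂ − 2q₁₂q₁ − ½q₁₁₁₁ + 3q₁²q₁₁ = 0. -/
theorem toda_implies_boussinesq (q r s : ℝ → ℝ → ℝ)
    (hq : ContDiff ℝ (⊤ : ℕ∞) (fun p : ℝ × ℝ => q p.1 p.2))
    (hr : ContDiff ℝ (⊤ : ℕ∞) (fun p : ℝ × ℝ => r p.1 p.2))
    (hs : ContDiff ℝ (⊤ : ℕ∞) (fun p : ℝ × ℝ => s p.1 p.2))
    (h1 : ∀ t1 t2, Real.exp (r t1 t2 - q t1 t2)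
      = (1 / 2) * (pd2 q t1 t2 + pd1 (pd1 q) t1 t2 - (pd1 q t1 t2) ^ 2))
    (h2 : ∀ t1 t2, Real.exp (q t1 t2 - s t1 t2)
      = (1 / 2) * (pd2 q t1 t2 - pd1 (pd1 q) t1 t2 - (pd1 q t1 t2) ^ 2))
    (h3 : ∀ t1 t2, Real.exp (r t1 t2 - q t1 t2)
      = (1 / 2) * (pd2 r t1 t2 - pd1 (pd1 r) t1 t2 - (pd1 r t1 t2) ^ 2))
    (h4 : ∀ t1 t2, Real.exp (q t1 t2 - s t1 t2)
      = (1 / 2) * (pd2 s t1 t2 + pd1 (pd1 s) t1 t2 - (pd1 s t1 t2) ^ 2)) :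
    ∀ t1 t2,
      (1 / 2) * pd2 (pd2 q) t1 t2
        - pd1 (pd1 q) t1 t2 * pd2 q t1 t2
        - 2 * pd2 (pd1 q) t1 t2 * pd1 q t1 t2
        - (1 / 2) * pd1 (pd1 (pd1 (pd1 q))) t1 t2
        + 3 * (pd1 q t1 t2) ^ 2 * pd1 (pd1 q) t1 t2 = 0 := by
  intro t1 t2
  have hEA : ∀ a b, (fun a b => Real.exp (r a b - q a b)) a b
      = (1 / 2) * (pd2 q a b + (1 : ℝ) * pd1 (pd1 q) a b - (pd1 q a b) ^ 2) := fun a b => by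
    linear_combination h1 a b
  have hEB : ∀ a b, (fun a b => Real.exp (q a b - s a b)) a b
      = (1 / 2) * (pd2 q a b + (-1 : ℝ) * pd1 (pd1 q) a b - (pd1 q a b) ^ 2) := fun a b => by
    linear_combination h2 a b
  have kA := (TodaAux.key hr hq h1 h3 t1 t2).1
  have kB := (TodaAux.key hq hs h4 h2 t1 t2).2
  have eA1 := TodaAux.derivG1 hq hEA t1 t2
  have eA2 := TodaAux.derivG2 hq hEA t1 t2
  have eA11 := TodaAux.derivG11 hq hEA t1 t2
  have eB1 := TodaAux.derivG1 hq hEB t1 t2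
  have eB2 := TodaAux.derivG2 hq hEB t1 t2
  have eB11 := TodaAux.derivG11 hq hEB t1 t2
  have cl := TodaAux.pd_comm hq t1 t2
  linear_combination (1 / 2) * kA + (1 / 2) * kB - (1 / 2) * eA2 - (1 / 2) * eB2
    + pd1 (pd1 q) t1 t2 * (h1 t1 t2) + pd1 (pd1 q) t1 t2 * (h2 t1 t2)
    + (1 / 2) * eA11 - (1 / 2) * eB11
    + pd1 q t1 t2 * eA1 + pd1 q t1 t2 * eB1 + pd1 q t1 t2 * cl
end

section
/- Let a, b : ℤ × ℝ → ℝ with a(n,·), b(n,·) smooth, and define B₁ = a − T⁻¹a, Q₁ = b, Q₂ = b² + a + T⁻¹a and B₂ = a·(b+Tb) − T⁻¹(a·(b+Tb)). Then B₁Q₂ − Q₁B₂ = Δ(a² − (Tb)·b·a), where Δ = id − T⁻¹ and T is the lattice shift. -/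
/-- The telescoping identity B₁Q₂ − Q₁B₂ = Δ(a² − (Tb)·b·a) for the first two
Toda flows in Flaschka variables, with a, b lattice sequences of smooth
functions of one real variable. -/
theorem toda_F12_identity (a b : ℤ → ℝ → ℝ)
    (ha : ∀ n, ContDiff ℝ (⊤ : ℕ∞) (a n)) (hb : ∀ n, ContDiff ℝ (⊤ : ℕ∞) (b n))
    (B1 Q1 Q2 B2 F : ℤ → ℝ → ℝ)
    (hB1 : ∀ n t, B1 n t = a n t - a (n - 1) t)
    (hQ1 : ∀ n t, Q1 n t = b n t)
    (hQ2 : ∀ n t, Q2 n t = (b n t) ^ 2 + a n t + a (n - 1) t)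
    (hB2 : ∀ n t, B2 n t
      = a n t * (b n t + b (n + 1) t) - a (n - 1) t * (b n t + b (n - 1) t))
    (hF : ∀ n t, F n t = (a n t) ^ 2 - b (n + 1) t * b n t * a n t) :
    ∀ n t, B1 n t * Q2 n t - Q1 n t * B2 n t = F n t - F (n - 1) t := by
  intro n t
  rw [hB1, hQ1, hQ2, hB2, hF, hF]
  have h : n - 1 + 1 = n := by ring
  rw [h]
  ring
end

section
/- Let q : ℤ × ℝ² → ℝ be smooth in (t₁,t₂), write q̄(n)=q(n+1), q̲(n)=q(n−1), a = exp(q̄−q), and define L₀₁ = (1/2)q₁² − a, L₀₂ = q₁q₂ − (1/3)q₁³ − (q₁ + q̄₁)a, and L₁₂ = −a(q̄₁² + q̄₁₁ − q̄₂ + a). Then the expression P₀₁₂ := ΔL₁₂ − D₁L₀₂ + D₂L₀₁ (where Δ is the backward lattice difference and Dᵢ is the total derivative with respect to tᵢ) satisfies P₀₁₂ = −(q₁₁ − B₁)(q₂ − Q₂) + (q₁₂ − B₂)(q₁ − Q₁), where Q₁ = b, B₁ = a − a̲, Q₂ = b² + a + a̲, B₂ = a(b + b̄) − a̲(b + b̲),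 with b = q₁, a = exp(q̄−q) and a̲ = exp(q−q̲). -/
section helpers

variable {f : ℝ → ℝ → ℝ}

lemma slice1 (G : ℝ × ℝ → ℝ) (t1 t2 : ℝ) (hG : DifferentiableAt ℝ G (t1, t2)) :
    HasDerivAt (fun s => G (s, t2)) (fderiv ℝ G (t1, t2) (1, 0)) t1 := by
  have h := hG.hasFDerivAt.comp_hasDerivAt t1
    ((hasDerivAt_id t1).prodMk (hasDerivAt_const t1 t2))
  simpa [Function.comp_def] using h

lemma slice2 (G : ℝ × ℝ → ℝ) (t1 t2 : ℝ) (hG : DifferentiableAt ℝ G (t1, t2)) :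
    HasDerivAt (fun s => G (t1, s)) (fderiv ℝ G (t1, t2) (0, 1)) t2 := by
  have h := hG.hasFDerivAt.comp_hasDerivAt t2
    ((hasDerivAt_const t2 t1).prodMk (hasDerivAt_id t2))
  simpa [Function.comp_def] using h

lemma diff1 (hf : ContDiff ℝ (⊤ : ℕ∞) (fun p : ℝ × ℝ => f p.1 p.2)) (t2 : ℝ) :
    Differentiable ℝ (fun s => f s t2) := by
  have : Differentiable ℝ ((fun p : ℝ × ℝ => f p.1 p.2) ∘ (fun s : ℝ => (s, t2))) :=
    (hf.differentiable (by simp)).comp (differentiable_id.prodMk (differentiable_const t2))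
  exact this

lemma diff2 (hf : ContDiff ℝ (⊤ : ℕ∞) (fun p : ℝ × ℝ => f p.1 p.2)) (t1 : ℝ) :
    Differentiable ℝ (fun s => f t1 s) := by
  have : Differentiable ℝ ((fun p : ℝ × ℝ => f p.1 p.2) ∘ (fun s : ℝ => (t1, s))) :=
    (hf.differentiable (by simp)).comp ((differentiable_const t1).prodMk differentiable_id)
  exact this

lemma hasDerivAt_pd1 (hf : ContDiff ℝ (⊤ : ℕ∞) (fun p : ℝ × ℝ => f p.1 p.2)) (t1 t2 : ℝ) :
    HasDerivAt (fun s => f s t2) (pd1 f t1 t2) t1 :=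
  ((diff1 hf t2) t1).hasDerivAt

lemma hasDerivAt_pd2 (hf : ContDiff ℝ (⊤ : ℕ∞) (fun p : ℝ × ℝ => f p.1 p.2)) (t1 t2 : ℝ) :
    HasDerivAt (fun s => f t1 s) (pd2 f t1 t2) t2 :=
  ((diff2 hf t1) t2).hasDerivAt

lemma pd1_eq_fderiv (hf : ContDiff ℝ (⊤ : ℕ∞) (fun p : ℝ × ℝ => f p.1 p.2)) (t1 t2 : ℝ) :
    pd1 f t1 t2 = fderiv ℝ (fun p : ℝ × ℝ => f p.1 p.2) (t1, t2) (1, 0) :=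
  ((slice1 _ t1 t2 ((hf.differentiable (by simp)) (t1, t2))).deriv).symm ▸ rfl

lemma pd2_eq_fderiv (hf : ContDiff ℝ (⊤ : ℕ∞) (fun p : ℝ × ℝ => f p.1 p.2)) (t1 t2 : ℝ) :
    pd2 f t1 t2 = fderiv ℝ (fun p : ℝ × ℝ => f p.1 p.2) (t1, t2) (0, 1) :=
  ((slice2 _ t1 t2 ((hf.differentiable (by simp)) (t1, t2))).deriv).symm ▸ rfl

lemma contDiff_fderiv_apply (hf : ContDiff ℝ (⊤ : ℕ∞) (fun p : ℝ × ℝ => f p.1 p.2)) (v : ℝ × ℝ) :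
    ContDiff ℝ (⊤ : ℕ∞) (fun p : ℝ × ℝ => fderiv ℝ (fun p : ℝ × ℝ => f p.1 p.2) p v) := by
  exact (ContinuousLinearMap.apply ℝ ℝ v).contDiff.comp (hf.fderiv_right (by simp))

lemma contDiff_pd1 (hf : ContDiff ℝ (⊤ : ℕ∞) (fun p : ℝ × ℝ => f p.1 p.2)) :
    ContDiff ℝ (⊤ : ℕ∞) (fun p : ℝ × ℝ => pd1 f p.1 p.2) := by
  have h : (fun p : ℝ × ℝ => pd1 f p.1 p.2)
      = fun p : ℝ × ℝ => fderiv ℝ (fun p : ℝ × ℝ => f p.1 p.2) p (1, 0) := by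
    funext p
    exact pd1_eq_fderiv hf p.1 p.2
  rw [h]
  exact contDiff_fderiv_apply hf (1, 0)

lemma contDiff_pd2 (hf : ContDiff ℝ (⊤ : ℕ∞) (fun p : ℝ × ℝ => f p.1 p.2)) :
    ContDiff ℝ (⊤ : ℕ∞) (fun p : ℝ × ℝ => pd2 f p.1 p.2) := by
  have h : (fun p : ℝ × ℝ => pd2 f p.1 p.2)
      = fun p : ℝ × ℝ => fderiv ℝ (fun p : ℝ × ℝ => f p.1 p.2) p (0, 1) := by
    funext p
    exact pd2_eq_fderiv hf p.1 p.2
  rw [h]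
  exact contDiff_fderiv_apply hf (0, 1)

lemma pd_symm (hf : ContDiff ℝ (⊤ : ℕ∞) (fun p : ℝ × ℝ => f p.1 p.2)) (t1 t2 : ℝ) :
    pd1 (pd2 f) t1 t2 = pd2 (pd1 f) t1 t2 := by
  set F : ℝ × ℝ → ℝ := fun p : ℝ × ℝ => f p.1 p.2 with hF
  have hd1 : Differentiable ℝ F := hf.differentiable (by simp)
  have hdF : Differentiable ℝ (fderiv ℝ F) := (hf.fderiv_right (m := (⊤ : ℕ∞)) (by simp)).differentiable (by simp)
  set F'' := fderiv ℝ (fderiv ℝ F) (t1, t2) with hF''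
  have hsym : F'' (1, 0) (0, 1) = F'' (0, 1) (1, 0) :=
    second_derivative_symmetric (fun y => (hd1 y).hasFDerivAt)
      ((hdF (t1, t2)).hasFDerivAt) _ _
  have e1 : pd1 (pd2 f) t1 t2 = F'' (1, 0) (0, 1) := by
    have hfun : (fun s => pd2 f s t2)
        = fun s => (ContinuousLinearMap.apply ℝ ℝ (0, 1) : (ℝ × ℝ →L[ℝ] ℝ) →L[ℝ] ℝ)
            (fderiv ℝ F (s, t2)) := by
      funext s
      exact pd2_eq_fderiv hf s t2
    have hG : HasDerivAt
        (fun s => (ContinuousLinearMap.apply ℝ ℝ (0, 1) : (ℝ × ℝ →L[ℝ] ℝ) →L[ℝ] ℝ)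
            (fderiv ℝ F (s, t2)))
        (((ContinuousLinearMap.apply ℝ ℝ (0, 1) : (ℝ × ℝ →L[ℝ] ℝ) →L[ℝ] ℝ).comp F'')
          (1, 0)) t1 := by
      have := ((ContinuousLinearMap.apply ℝ ℝ ((0 : ℝ), (1 : ℝ))).hasFDerivAt.comp (t1, t2)
        (hdF (t1, t2)).hasFDerivAt).comp_hasDerivAt t1
        ((hasDerivAt_id t1).prodMk (hasDerivAt_const t1 t2))
      exact this
    have : deriv (fun s => pd2 f s t2) t1
        = (((ContinuousLinearMap.apply ℝ ℝ (0, 1) : (ℝ × ℝ →L[ℝ] ℝ) →L[ℝ] ℝ).comp F'')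
          (1, 0)) := by
      rw [hfun]; exact hG.deriv
    exact this
  have e2 : pd2 (pd1 f) t1 t2 = F'' (0, 1) (1, 0) := by
    have hfun : (fun s => pd1 f t1 s)
        = fun s => (ContinuousLinearMap.apply ℝ ℝ (1, 0) : (ℝ × ℝ →L[ℝ] ℝ) →L[ℝ] ℝ)
            (fderiv ℝ F (t1, s)) := by
      funext s
      exact pd1_eq_fderiv hf t1 s
    have hG : HasDerivAt
        (fun s => (ContinuousLinearMap.apply ℝ ℝ (1, 0) : (ℝ × ℝ →L[ℝ] ℝ) →L[ℝ] ℝ)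
            (fderiv ℝ F (t1, s)))
        (((ContinuousLinearMap.apply ℝ ℝ (1, 0) : (ℝ × ℝ →L[ℝ] ℝ) →L[ℝ] ℝ).comp F'')
          (0, 1)) t2 := by
      have := ((ContinuousLinearMap.apply ℝ ℝ ((1 : ℝ), (0 : ℝ))).hasFDerivAt.comp (t1, t2)
        (hdF (t1, t2)).hasFDerivAt).comp_hasDerivAt t2
        ((hasDerivAt_const t2 t1).prodMk (hasDerivAt_id t2))
      exact this
    have : deriv (fun s => pd1 f t1 s) t2
        = (((ContinuousLinearMap.apply ℝ ℝ (1, 0) : (ℝ × ℝ →L[ℝ] ℝ) →L[ℝ] ℝ).comp F'')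
          (0, 1)) := by
      rw [hfun]; exact hG.deriv
    exact this
  rw [e1, e2, hsym]

end helpers

/-- The double-zero factorization (Toda-closure) of the coefficient
P₀₁₂ = ΔL₁₂ − D₁L₀₂ + D₂L₀₁ of the exterior derivative of the semi-discrete
Lagrangian 2-form of the Toda hierarchy. -/
theorem toda_double_zero_factorization (q a au b L01 L02 L12 : ℤ → ℝ → ℝ → ℝ)
    (hq : ∀ n, ContDiff ℝ (⊤ : ℕ∞) (fun p : ℝ × ℝ => q n p.1 p.2))
    (ha : ∀ n t1 t2, a n t1 t2 = Real.exp (q (n + 1) t1 t2 - q n t1 t2))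
    (hau : ∀ n t1 t2, au n t1 t2 = Real.exp (q n t1 t2 - q (n - 1) t1 t2))
    (hb : ∀ n t1 t2, b n t1 t2 = pd1 (q n) t1 t2)
    (hL01 : ∀ n t1 t2, L01 n t1 t2 = (1 / 2) * (pd1 (q n) t1 t2) ^ 2 - a n t1 t2)
    (hL02 : ∀ n t1 t2, L02 n t1 t2
      = pd1 (q n) t1 t2 * pd2 (q n) t1 t2 - (1 / 3) * (pd1 (q n) t1 t2) ^ 3
        - (pd1 (q n) t1 t2 + pd1 (q (n + 1)) t1 t2) * a n t1 t2)
    (hL12 : ∀ n t1 t2, L12 n t1 t2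
      = -(a n t1 t2) * ((pd1 (q (n + 1)) t1 t2) ^ 2 + pd1 (pd1 (q (n + 1))) t1 t2
          - pd2 (q (n + 1)) t1 t2 + a n t1 t2)) :
    ∀ n t1 t2,
      (L12 n t1 t2 - L12 (n - 1) t1 t2) - pd1 (L02 n) t1 t2 + pd2 (L01 n) t1 t2
        = -(pd1 (pd1 (q n)) t1 t2 - (a n t1 t2 - au n t1 t2))
            * (pd2 (q n) t1 t2 - ((b n t1 t2) ^ 2 + a n t1 t2 + au n t1 t2))
          + (pd2 (pd1 (q n)) t1 t2
              - (a n t1 t2 * (b n t1 t2 + b (n + 1) t1 t2)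
                - au n t1 t2 * (b n t1 t2 + b (n - 1) t1 t2)))
            * (pd1 (q n) t1 t2 - b n t1 t2) := by
  intro n t1 t2
  have hidx : n - 1 + 1 = n := by ring
  -- derivative facts in the t1 direction
  have hq1 := hasDerivAt_pd1 (hq n) t1 t2
  have hq1' := hasDerivAt_pd1 (hq (n + 1)) t1 t2
  have hp11 := hasDerivAt_pd1 (contDiff_pd1 (hq n)) t1 t2
  have hp11' := hasDerivAt_pd1 (contDiff_pd1 (hq (n + 1))) t1 t2
  have hp12 := hasDerivAt_pd1 (contDiff_pd2 (hq n)) t1 t2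
  have hA1 := (hq1'.sub hq1).exp
  have big1 : HasDerivAt
      (fun s => pd1 (q n) s t2 * pd2 (q n) s t2 - (1 / 3) * (pd1 (q n) s t2) ^ 3
        - (pd1 (q n) s t2 + pd1 (q (n + 1)) s t2) * Real.exp (q (n + 1) s t2 - q n s t2))
      (pd1 (pd1 (q n)) t1 t2 * pd2 (q n) t1 t2 + pd1 (q n) t1 t2 * pd1 (pd2 (q n)) t1 t2
        - (1 / 3) * ((3 : ℕ) * (pd1 (q n) t1 t2) ^ 2 * pd1 (pd1 (q n)) t1 t2)
        - ((pd1 (pd1 (q n)) t1 t2 + pd1 (pd1 (q (n + 1))) t1 t2)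
            * Real.exp (q (n + 1) t1 t2 - q n t1 t2)
          + (pd1 (q n) t1 t2 + pd1 (q (n + 1)) t1 t2)
            * (Real.exp (q (n + 1) t1 t2 - q n t1 t2)
              * (pd1 (q (n + 1)) t1 t2 - pd1 (q n) t1 t2)))) t1 := by
    exact ((hp11.mul hp12).sub ((hp11.pow 3).const_mul (1 / 3))).sub
      ((hp11.add hp11').mul hA1)
  have e02 : pd1 (L02 n) t1 t2
      = pd1 (pd1 (q n)) t1 t2 * pd2 (q n) t1 t2 + pd1 (q n) t1 t2 * pd1 (pd2 (q n)) t1 t2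
        - (1 / 3) * ((3 : ℕ) * (pd1 (q n) t1 t2) ^ 2 * pd1 (pd1 (q n)) t1 t2)
        - ((pd1 (pd1 (q n)) t1 t2 + pd1 (pd1 (q (n + 1))) t1 t2)
            * Real.exp (q (n + 1) t1 t2 - q n t1 t2)
          + (pd1 (q n) t1 t2 + pd1 (q (n + 1)) t1 t2)
            * (Real.exp (q (n + 1) t1 t2 - q n t1 t2)
              * (pd1 (q (n + 1)) t1 t2 - pd1 (q n) t1 t2))) := by
    have hfun : (fun s => L02 n s t2)
        = fun s => pd1 (q n) s t2 * pd2 (q n) s t2 - (1 / 3) * (pd1 (q n) s t2) ^ 3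
            - (pd1 (q n) s t2 + pd1 (q (n + 1)) s t2)
              * Real.exp (q (n + 1) s t2 - q n s t2) := by
      funext s
      rw [hL02 n s t2, ha n s t2]
    show deriv (fun s => L02 n s t2) t1 = _
    rw [hfun]
    exact big1.deriv
  -- derivative facts in the t2 direction
  have hq2 := hasDerivAt_pd2 (hq n) t1 t2
  have hq2' := hasDerivAt_pd2 (hq (n + 1)) t1 t2
  have hp21 := hasDerivAt_pd2 (contDiff_pd1 (hq n)) t1 t2
  have hA2 := (hq2'.sub hq2).exp
  have big2 : HasDerivAt
      (fun s => (1 / 2) * (pd1 (q n) t1 s) ^ 2 - Real.exp (q (n + 1) t1 s - q n t1 s))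
      ((1 / 2) * ((2 : ℕ) * (pd1 (q n) t1 t2) ^ 1 * pd2 (pd1 (q n)) t1 t2)
        - Real.exp (q (n + 1) t1 t2 - q n t1 t2)
          * (pd2 (q (n + 1)) t1 t2 - pd2 (q n) t1 t2)) t2 := by
    exact ((hp21.pow 2).const_mul (1 / 2)).sub hA2
  have e01 : pd2 (L01 n) t1 t2
      = (1 / 2) * ((2 : ℕ) * (pd1 (q n) t1 t2) ^ 1 * pd2 (pd1 (q n)) t1 t2)
        - Real.exp (q (n + 1) t1 t2 - q n t1 t2)
          * (pd2 (q (n + 1)) t1 t2 - pd2 (q n) t1 t2) := by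
    have hfun : (fun s => L01 n t1 s)
        = fun s => (1 / 2) * (pd1 (q n) t1 s) ^ 2
            - Real.exp (q (n + 1) t1 s - q n t1 s) := by
      funext s
      rw [hL01 n t1 s, ha n t1 s]
    show deriv (fun s => L01 n t1 s) t2 = _
    rw [hfun]
    exact big2.deriv
  have hsymm := pd_symm (hq n) t1 t2
  rw [hsymm] at e02
  rw [hL12 n t1 t2, hL12 (n - 1) t1 t2, hidx, e02, e01, ha n t1 t2, ha (n - 1) t1 t2,
    hidx, hau n t1 t2, hb n t1 t2, hb (n + 1) t1 t2, hb (n - 1) t1 t2]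
  push_cast
  ring
end

section
/- Let q : ℤ × ℝ² → ℝ be smooth, α ≠ 0 and β constants, and set v = 1/(α + q̄ − q̲) (so v(n) = 1/(α + q(n+1) − q(n−1)), assumed nonvanishing denominators). Define L₀₁ = q₁q̄ − α log(α + q̄ − q̲), L₀₂ = q₂q̄ − α²·v·v̄, and L₁₂ = α²v̄²(v·q̿₁ + v̿·q₁) + α²βv̄²(v̿ + v) − α³v·v̄²·v̿ + αv̄·q₂ + β·q̄₂. Then ΔL₁₂ − D₁L₀₂ + D₂L₀₁ = (q̄₂ + α²v̄²(v̿ + v))(q₁ − αv + β) − (q₂ + α²v²(v̄ + v̲))(q̄₁ − αv̄ + β), where Δ is the backward lattice difference, Dᵢ the total tᵢ-derivative, and bars/underlines denote lattice shifts. -/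
private lemma line1 (t1 t2 : ℝ) : HasDerivAt (fun s : ℝ => (s, t2)) ((1:ℝ), (0:ℝ)) t1 :=
  HasDerivAt.prodMk (hasDerivAt_id t1) (hasDerivAt_const t1 t2)

private lemma line2 (t1 t2 : ℝ) : HasDerivAt (fun s : ℝ => (t1, s)) ((0:ℝ), (1:ℝ)) t2 :=
  HasDerivAt.prodMk (hasDerivAt_const t2 t1) (hasDerivAt_id t2)

private lemma slice1_s13 {q : ℝ → ℝ → ℝ} (h : ContDiff ℝ (⊤ : ℕ∞) (fun p : ℝ × ℝ => q p.1 p.2))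
    (t1 t2 : ℝ) :
    HasDerivAt (fun s => q s t2)
      (fderiv ℝ (fun p : ℝ × ℝ => q p.1 p.2) (t1, t2) (1, 0)) t1 := by
  simpa [Function.comp_def] using
    ((h.differentiable (by simp) (t1, t2)).hasFDerivAt.comp_hasDerivAt t1 (line1 t1 t2))

private lemma slice2_s13 {q : ℝ → ℝ → ℝ} (h : ContDiff ℝ (⊤ : ℕ∞) (fun p : ℝ × ℝ => q p.1 p.2))
    (t1 t2 : ℝ) :
    HasDerivAt (fun s => q t1 s)
      (fderiv ℝ (fun p : ℝ × ℝ => q p.1 p.2) (t1, t2) (0, 1)) t2 := by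
  simpa [Function.comp_def] using
    ((h.differentiable (by simp) (t1, t2)).hasFDerivAt.comp_hasDerivAt t2 (line2 t1 t2))

private lemma slice1' {q : ℝ → ℝ → ℝ} (h : ContDiff ℝ (⊤ : ℕ∞) (fun p : ℝ × ℝ => q p.1 p.2))
    (t1 t2 : ℝ) (w : ℝ × ℝ) :
    HasDerivAt (fun s => fderiv ℝ (fun p : ℝ × ℝ => q p.1 p.2) (s, t2) w)
      (fderiv ℝ (fderiv ℝ (fun p : ℝ × ℝ => q p.1 p.2)) (t1, t2) (1, 0) w) t1 := by
  set F := fun p : ℝ × ℝ => q p.1 p.2 with hF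
  have hG : Differentiable ℝ (fderiv ℝ F) :=
    (h.fderiv_right (m := 1) (WithTop.coe_le_coe.mpr le_top)).differentiable one_ne_zero
  have h1 : HasDerivAt (fun s => fderiv ℝ F (s, t2))
      (fderiv ℝ (fderiv ℝ F) (t1, t2) (1, 0)) t1 := by
    simpa [Function.comp_def] using
      ((hG (t1, t2)).hasFDerivAt.comp_hasDerivAt t1 (line1 t1 t2))
  simpa using h1.clm_apply (hasDerivAt_const t1 w)

private lemma slice2' {q : ℝ → ℝ → ℝ} (h : ContDiff ℝ (⊤ : ℕ∞) (fun p : ℝ × ℝ => q p.1 p.2))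
    (t1 t2 : ℝ) (w : ℝ × ℝ) :
    HasDerivAt (fun s => fderiv ℝ (fun p : ℝ × ℝ => q p.1 p.2) (t1, s) w)
      (fderiv ℝ (fderiv ℝ (fun p : ℝ × ℝ => q p.1 p.2)) (t1, t2) (0, 1) w) t2 := by
  set F := fun p : ℝ × ℝ => q p.1 p.2 with hF
  have hG : Differentiable ℝ (fderiv ℝ F) :=
    (h.fderiv_right (m := 1) (WithTop.coe_le_coe.mpr le_top)).differentiable one_ne_zero
  have h1 : HasDerivAt (fun s => fderiv ℝ F (t1, s))
      (fderiv ℝ (fderiv ℝ F) (t1, t2) (0, 1)) t2 := by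
    simpa [Function.comp_def] using
      ((hG (t1, t2)).hasFDerivAt.comp_hasDerivAt t2 (line2 t1 t2))
  simpa using h1.clm_apply (hasDerivAt_const t2 w)

private lemma mixed_symm {q : ℝ → ℝ → ℝ} (h : ContDiff ℝ (⊤ : ℕ∞) (fun p : ℝ × ℝ => q p.1 p.2))
    (p : ℝ × ℝ) (v w : ℝ × ℝ) :
    fderiv ℝ (fderiv ℝ (fun p : ℝ × ℝ => q p.1 p.2)) p v w
      = fderiv ℝ (fderiv ℝ (fun p : ℝ × ℝ => q p.1 p.2)) p w v := by
  set F := fun p : ℝ × ℝ => q p.1 p.2 with hF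
  have hd : ∀ y, HasFDerivAt F (fderiv ℝ F y) y :=
    fun y => (h.differentiable (by simp) y).hasFDerivAt
  have h2 : HasFDerivAt (fderiv ℝ F) (fderiv ℝ (fderiv ℝ F) p) p :=
    (((h.fderiv_right (m := 1) (WithTop.coe_le_coe.mpr le_top)).differentiable one_ne_zero) p).hasFDerivAt
  exact second_derivative_symmetric hd h2 v w

private lemma pd1_eq {q : ℝ → ℝ → ℝ} (h : ContDiff ℝ (⊤ : ℕ∞) (fun p : ℝ × ℝ => q p.1 p.2))
    (t1 t2 : ℝ) :
    pd1 q t1 t2 = fderiv ℝ (fun p : ℝ × ℝ => q p.1 p.2) (t1, t2) (1, 0) :=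
  (slice1_s13 h t1 t2).deriv

private lemma pd2_eq {q : ℝ → ℝ → ℝ} (h : ContDiff ℝ (⊤ : ℕ∞) (fun p : ℝ × ℝ => q p.1 p.2))
    (t1 t2 : ℝ) :
    pd2 q t1 t2 = fderiv ℝ (fun p : ℝ × ℝ => q p.1 p.2) (t1, t2) (0, 1) :=
  (slice2_s13 h t1 t2).deriv
/-- Double-zero factorization of the exterior derivative of the semi-discrete
Lagrangian 2-form for the potential KdV hierarchy. -/
theorem sdpkdv_double_zero (q v L01 L02 L12 : ℤ → ℝ → ℝ → ℝ) (α β : ℝ)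
    (hα : α ≠ 0)
    (hq : ∀ n, ContDiff ℝ (⊤ : ℕ∞) (fun p : ℝ × ℝ => q n p.1 p.2))
    (hden : ∀ n t1 t2, α + q (n + 1) t1 t2 - q (n - 1) t1 t2 ≠ 0)
    (hv : ∀ n t1 t2, v n t1 t2 = 1 / (α + q (n + 1) t1 t2 - q (n - 1) t1 t2))
    (hL01 : ∀ n t1 t2, L01 n t1 t2
      = pd1 (q n) t1 t2 * q (n + 1) t1 t2
        - α * Real.log (α + q (n + 1) t1 t2 - q (n - 1) t1 t2))
    (hL02 : ∀ n t1 t2, L02 n t1 t2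
      = pd2 (q n) t1 t2 * q (n + 1) t1 t2 - α ^ 2 * v n t1 t2 * v (n + 1) t1 t2)
    (hL12 : ∀ n t1 t2, L12 n t1 t2
      = α ^ 2 * (v (n + 1) t1 t2) ^ 2
          * (v n t1 t2 * pd1 (q (n + 2)) t1 t2 + v (n + 2) t1 t2 * pd1 (q n) t1 t2)
        + α ^ 2 * β * (v (n + 1) t1 t2) ^ 2 * (v (n + 2) t1 t2 + v n t1 t2)
        - α ^ 3 * v n t1 t2 * (v (n + 1) t1 t2) ^ 2 * v (n + 2) t1 t2
        + α * v (n + 1) t1 t2 * pd2 (q n) t1 t2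
        + β * pd2 (q (n + 1)) t1 t2) :
    ∀ n t1 t2,
      (L12 n t1 t2 - L12 (n - 1) t1 t2) - pd1 (L02 n) t1 t2 + pd2 (L01 n) t1 t2
        = (pd2 (q (n + 1)) t1 t2
            + α ^ 2 * (v (n + 1) t1 t2) ^ 2 * (v (n + 2) t1 t2 + v n t1 t2))
            * (pd1 (q n) t1 t2 - α * v n t1 t2 + β)
          - (pd2 (q n) t1 t2
              + α ^ 2 * (v n t1 t2) ^ 2 * (v (n + 1) t1 t2 + v (n - 1) t1 t2))
            * (pd1 (q (n + 1)) t1 t2 - α * v (n + 1) t1 t2 + β) := by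
  intro n t1 t2
  have e1 : n + 1 + 1 = n + 2 := by ring
  have e2 : n + 1 - 1 = n := by ring
  have e3 : n - 1 + 1 = n := by ring
  have e4 : n - 1 + 2 = n + 1 := by ring
  have hdn : α + q (n + 1) t1 t2 - q (n - 1) t1 t2 ≠ 0 := hden n t1 t2
  have hdn1 : α + q (n + 2) t1 t2 - q n t1 t2 ≠ 0 := by
    have := hden (n + 1) t1 t2; rwa [e1, e2] at this
  -- derivative of L02 n in t1
  have hfun02 : (fun s => L02 n s t2) = (fun s =>
      fderiv ℝ (fun p : ℝ × ℝ => q n p.1 p.2) (s, t2) (0, 1) * q (n + 1) s t2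
      - α ^ 2 * (α + q (n + 1) s t2 - q (n - 1) s t2)⁻¹
        * (α + q (n + 2) s t2 - q n s t2)⁻¹) := by
    funext s
    rw [hL02 n s t2, hv n s t2, hv (n + 1) s t2, e1, e2, pd2_eq (hq n) s t2]
    ring
  have hdena : HasDerivAt (fun s => α + q (n + 1) s t2 - q (n - 1) s t2)
      (0 + fderiv ℝ (fun p : ℝ × ℝ => q (n + 1) p.1 p.2) (t1, t2) (1, 0)
        - fderiv ℝ (fun p : ℝ × ℝ => q (n - 1) p.1 p.2) (t1, t2) (1, 0)) t1 :=
    ((hasDerivAt_const t1 α).add (slice1_s13 (hq (n + 1)) t1 t2)).sub (slice1_s13 (hq (n - 1)) t1 t2)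
  have hdenb : HasDerivAt (fun s => α + q (n + 2) s t2 - q n s t2)
      (0 + fderiv ℝ (fun p : ℝ × ℝ => q (n + 2) p.1 p.2) (t1, t2) (1, 0)
        - fderiv ℝ (fun p : ℝ × ℝ => q n p.1 p.2) (t1, t2) (1, 0)) t1 :=
    ((hasDerivAt_const t1 α).add (slice1_s13 (hq (n + 2)) t1 t2)).sub (slice1_s13 (hq n) t1 t2)
  have hinva := hdena.inv hdn
  have hinvb := hdenb.inv hdn1
  have comb02 := ((slice1' (hq n) t1 t2 ((0 : ℝ), (1 : ℝ))).mul
      (slice1_s13 (hq (n + 1)) t1 t2)).sub ((hinva.const_mul (α ^ 2)).mul hinvb)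
  have e02 : pd1 (L02 n) t1 t2 =
      fderiv ℝ (fderiv ℝ (fun p : ℝ × ℝ => q n p.1 p.2)) (t1, t2) (1, 0) (0, 1)
          * q (n + 1) t1 t2
        + fderiv ℝ (fun p : ℝ × ℝ => q n p.1 p.2) (t1, t2) (0, 1)
          * fderiv ℝ (fun p : ℝ × ℝ => q (n + 1) p.1 p.2) (t1, t2) (1, 0)
        - ((α ^ 2 * (-(0 + fderiv ℝ (fun p : ℝ × ℝ => q (n + 1) p.1 p.2) (t1, t2) (1, 0)
                - fderiv ℝ (fun p : ℝ × ℝ => q (n - 1) p.1 p.2) (t1, t2) (1, 0))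
              / (α + q (n + 1) t1 t2 - q (n - 1) t1 t2) ^ 2))
            * (α + q (n + 2) t1 t2 - q n t1 t2)⁻¹
          + α ^ 2 * (α + q (n + 1) t1 t2 - q (n - 1) t1 t2)⁻¹
            * (-(0 + fderiv ℝ (fun p : ℝ × ℝ => q (n + 2) p.1 p.2) (t1, t2) (1, 0)
                - fderiv ℝ (fun p : ℝ × ℝ => q n p.1 p.2) (t1, t2) (1, 0))
              / (α + q (n + 2) t1 t2 - q n t1 t2) ^ 2)) := by
    show deriv (fun s => L02 n s t2) t1 = _
    rw [hfun02]
    exact comb02.deriv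
  -- derivative of L01 n in t2
  have hfun01 : (fun s => L01 n t1 s) = (fun s =>
      fderiv ℝ (fun p : ℝ × ℝ => q n p.1 p.2) (t1, s) (1, 0) * q (n + 1) t1 s
      - α * Real.log (α + q (n + 1) t1 s - q (n - 1) t1 s)) := by
    funext s
    rw [hL01 n t1 s, pd1_eq (hq n) t1 s]
  have hdenc : HasDerivAt (fun s => α + q (n + 1) t1 s - q (n - 1) t1 s)
      (0 + fderiv ℝ (fun p : ℝ × ℝ => q (n + 1) p.1 p.2) (t1, t2) (0, 1)
        - fderiv ℝ (fun p : ℝ × ℝ => q (n - 1) p.1 p.2) (t1, t2) (0, 1)) t2 :=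
    ((hasDerivAt_const t2 α).add (slice2_s13 (hq (n + 1)) t1 t2)).sub (slice2_s13 (hq (n - 1)) t1 t2)
  have comb01 := ((slice2' (hq n) t1 t2 ((1 : ℝ), (0 : ℝ))).mul
      (slice2_s13 (hq (n + 1)) t1 t2)).sub ((hdenc.log hdn).const_mul α)
  have e01 : pd2 (L01 n) t1 t2 =
      fderiv ℝ (fderiv ℝ (fun p : ℝ × ℝ => q n p.1 p.2)) (t1, t2) (0, 1) (1, 0)
          * q (n + 1) t1 t2
        + fderiv ℝ (fun p : ℝ × ℝ => q n p.1 p.2) (t1, t2) (1, 0)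
          * fderiv ℝ (fun p : ℝ × ℝ => q (n + 1) p.1 p.2) (t1, t2) (0, 1)
        - α * ((0 + fderiv ℝ (fun p : ℝ × ℝ => q (n + 1) p.1 p.2) (t1, t2) (0, 1)
            - fderiv ℝ (fun p : ℝ × ℝ => q (n - 1) p.1 p.2) (t1, t2) (0, 1))
          / (α + q (n + 1) t1 t2 - q (n - 1) t1 t2)) := by
    show deriv (fun s => L01 n t1 s) t2 = _
    rw [hfun01]
    exact comb01.deriv
  have hsym : fderiv ℝ (fderiv ℝ (fun p : ℝ × ℝ => q n p.1 p.2)) (t1, t2) (0, 1) (1, 0)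
      = fderiv ℝ (fderiv ℝ (fun p : ℝ × ℝ => q n p.1 p.2)) (t1, t2) (1, 0) (0, 1) :=
    mixed_symm (hq n) (t1, t2) ((0 : ℝ), (1 : ℝ)) ((1 : ℝ), (0 : ℝ))
  have hv1 : (α + q (n + 1) t1 t2 - q (n - 1) t1 t2)⁻¹ = v n t1 t2 := by
    rw [hv n t1 t2, one_div]
  have hv2 : (α + q (n + 2) t1 t2 - q n t1 t2)⁻¹ = v (n + 1) t1 t2 := by
    rw [hv (n + 1) t1 t2, e1, e2, one_div]
  have e02v : pd1 (L02 n) t1 t2 =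
      fderiv ℝ (fderiv ℝ (fun p : ℝ × ℝ => q n p.1 p.2)) (t1, t2) (1, 0) (0, 1)
          * q (n + 1) t1 t2
        + fderiv ℝ (fun p : ℝ × ℝ => q n p.1 p.2) (t1, t2) (0, 1)
          * fderiv ℝ (fun p : ℝ × ℝ => q (n + 1) p.1 p.2) (t1, t2) (1, 0)
        - ((α ^ 2 * (-(0 + fderiv ℝ (fun p : ℝ × ℝ => q (n + 1) p.1 p.2) (t1, t2) (1, 0)
                - fderiv ℝ (fun p : ℝ × ℝ => q (n - 1) p.1 p.2) (t1, t2) (1, 0))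
              * (v n t1 t2) ^ 2)) * v (n + 1) t1 t2
          + α ^ 2 * v n t1 t2
            * (-(0 + fderiv ℝ (fun p : ℝ × ℝ => q (n + 2) p.1 p.2) (t1, t2) (1, 0)
                - fderiv ℝ (fun p : ℝ × ℝ => q n p.1 p.2) (t1, t2) (1, 0))
              * (v (n + 1) t1 t2) ^ 2)) := by
    have hp : ∀ x d : ℝ, x / d ^ 2 = x * (d⁻¹) ^ 2 := fun x d => by
      rw [inv_pow, div_eq_mul_inv]
    rw [e02, hp, hp, hv1, hv2]
  have e01v : pd2 (L01 n) t1 t2 =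
      fderiv ℝ (fderiv ℝ (fun p : ℝ × ℝ => q n p.1 p.2)) (t1, t2) (0, 1) (1, 0)
          * q (n + 1) t1 t2
        + fderiv ℝ (fun p : ℝ × ℝ => q n p.1 p.2) (t1, t2) (1, 0)
          * fderiv ℝ (fun p : ℝ × ℝ => q (n + 1) p.1 p.2) (t1, t2) (0, 1)
        - α * ((0 + fderiv ℝ (fun p : ℝ × ℝ => q (n + 1) p.1 p.2) (t1, t2) (0, 1)
            - fderiv ℝ (fun p : ℝ × ℝ => q (n - 1) p.1 p.2) (t1, t2) (0, 1))
          * v n t1 t2) := by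
    rw [e01, div_eq_mul_inv, hv1]
  rw [hL12 n t1 t2, hL12 (n - 1) t1 t2, e3, e4,
    pd1_eq (hq n) t1 t2, pd1_eq (hq (n + 1)) t1 t2, pd1_eq (hq (n + 2)) t1 t2,
    pd1_eq (hq (n - 1)) t1 t2, pd2_eq (hq n) t1 t2, pd2_eq (hq (n + 1)) t1 t2,
    pd2_eq (hq (n - 1)) t1 t2, e02v, e01v, hsym]
  ring
end

section
/- Let q : ℤ × ℝ² → ℝ be smooth, α ≠ 0, β constants, v = 1/(α + q̄ − q̲) with nonvanishing denominators. If q satisfies q₁ = αv − β and q₂ = −α²v²(v̄ + v̲) at every lattice site, then ΔL₁₂ − D₁L₀₂ + D₂L₀₁ = 0, with L₀₁, L₀₂, L₁₂ defined as: L₀₁ = q₁q̄ − α log(α + q̄ − q̲), L₀₂ = q₂q̄ − α²v·v̄, L₁₂ = α²v̄²(v·q̿₁ + v̿·q₁) + α²βv̄²(v̿ + v) − α³v·v̄²·v̿ + αv̄·q₂ + β·q̄₂. -/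
/-- Closure of the semi-discrete Lagrangian 2-form for the potential KdV
hierarchy on solutions. -/
theorem sdpkdv_closure (q v L01 L02 L12 : ℤ → ℝ → ℝ → ℝ) (α β : ℝ)
    (hα : α ≠ 0)
    (hq : ∀ n, ContDiff ℝ (⊤ : ℕ∞) (fun p : ℝ × ℝ => q n p.1 p.2))
    (hden : ∀ n t1 t2, α + q (n + 1) t1 t2 - q (n - 1) t1 t2 ≠ 0)
    (hv : ∀ n t1 t2, v n t1 t2 = 1 / (α + q (n + 1) t1 t2 - q (n - 1) t1 t2))
    (heq1 : ∀ n t1 t2, pd1 (q n) t1 t2 = α * v n t1 t2 - β)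
    (heq2 : ∀ n t1 t2, pd2 (q n) t1 t2
      = -α ^ 2 * (v n t1 t2) ^ 2 * (v (n + 1) t1 t2 + v (n - 1) t1 t2))
    (hL01 : ∀ n t1 t2, L01 n t1 t2
      = pd1 (q n) t1 t2 * q (n + 1) t1 t2
        - α * Real.log (α + q (n + 1) t1 t2 - q (n - 1) t1 t2))
    (hL02 : ∀ n t1 t2, L02 n t1 t2
      = pd2 (q n) t1 t2 * q (n + 1) t1 t2 - α ^ 2 * v n t1 t2 * v (n + 1) t1 t2)
    (hL12 : ∀ n t1 t2, L12 n t1 t2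
      = α ^ 2 * (v (n + 1) t1 t2) ^ 2
          * (v n t1 t2 * pd1 (q (n + 2)) t1 t2 + v (n + 2) t1 t2 * pd1 (q n) t1 t2)
        + α ^ 2 * β * (v (n + 1) t1 t2) ^ 2 * (v (n + 2) t1 t2 + v n t1 t2)
        - α ^ 3 * v n t1 t2 * (v (n + 1) t1 t2) ^ 2 * v (n + 2) t1 t2
        + α * v (n + 1) t1 t2 * pd2 (q n) t1 t2
        + β * pd2 (q (n + 1)) t1 t2) :
    ∀ n t1 t2,
      (L12 n t1 t2 - L12 (n - 1) t1 t2) - pd1 (L02 n) t1 t2 + pd2 (L01 n) t1 t2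
        = 0 := by
  intro n t1 t2
  -- differentiability of slices
  have hdiff1 : ∀ (m : ℤ) (t : ℝ) (s : ℝ), DifferentiableAt ℝ (fun x : ℝ => q m x t) s := by
    intro m t s
    exact (((hq m).differentiable (by simp)).differentiableAt).comp s
      (differentiableAt_fun_id.prodMk (differentiableAt_const t))
  have hdiff2 : ∀ (m : ℤ) (t : ℝ) (s : ℝ), DifferentiableAt ℝ (fun x : ℝ => q m t x) s := by
    intro m t s
    exact (((hq m).differentiable (by simp)).differentiableAt).comp s
      ((differentiableAt_const t).prodMk differentiableAt_fun_id)
  -- slice derivatives of q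
  have hQ1 : ∀ (m : ℤ) (s : ℝ), HasDerivAt (fun x => q m x t2) (α * v m s t2 - β) s := by
    intro m s
    have h := (hdiff1 m t2 s).hasDerivAt
    rwa [show deriv (fun x => q m x t2) s = pd1 (q m) s t2 from rfl, heq1] at h
  have hQ2 : ∀ (m : ℤ) (s : ℝ), HasDerivAt (fun x => q m t1 x)
      (-α ^ 2 * (v m t1 s) ^ 2 * (v (m + 1) t1 s + v (m - 1) t1 s)) s := by
    intro m s
    have h := (hdiff2 m t1 s).hasDerivAt
    rwa [show deriv (fun x => q m t1 x) s = pd2 (q m) t1 s from rfl, heq2] at h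
  -- slice derivatives of v
  have hV1 : ∀ (m : ℤ) (s : ℝ), HasDerivAt (fun x => v m x t2)
      (-α * (v m s t2 * v m s t2) * (v (m + 1) s t2 - v (m - 1) s t2)) s := by
    intro m s
    have hw := ((hQ1 (m + 1) s).const_add α).sub (hQ1 (m - 1) s)
    have hw2 := hw.inv (hden m s t2)
    have hfe : (fun x => v m x t2)
        = fun x => (α + q (m + 1) x t2 - q (m - 1) x t2)⁻¹ :=
      funext fun x => (hv m x t2).trans (one_div _)
    rw [hfe]
    refine hw2.congr_deriv (Eq.symm ?_)
    simp only [Pi.sub_apply]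
    rw [hv m s t2]
    field_simp
    ring
  have hV2 : ∀ (m : ℤ) (s : ℝ), HasDerivAt (fun x => v m t1 x)
      (-(v m t1 s * v m t1 s) *
        ((-α ^ 2 * (v (m + 1) t1 s) ^ 2 * (v (m + 2) t1 s + v m t1 s))
          - (-α ^ 2 * (v (m - 1) t1 s) ^ 2 * (v m t1 s + v (m - 2) t1 s)))) s := by
    intro m s
    have hw := ((hQ2 (m + 1) s).const_add α).sub (hQ2 (m - 1) s)
    have hw2 := hw.inv (hden m t1 s)
    simp only [show m + 1 + 1 = m + 2 from by ring, show m + 1 - 1 = m from by ring,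
      show m - 1 + 1 = m from by ring, show m - 1 - 1 = m - 2 from by ring] at hw2
    have hfe : (fun x => v m t1 x)
        = fun x => (α + q (m + 1) t1 x - q (m - 1) t1 x)⁻¹ :=
      funext fun x => (hv m t1 x).trans (one_div _)
    rw [hfe]
    refine hw2.congr_deriv (Eq.symm ?_)
    simp only [Pi.sub_apply]
    rw [hv m t1 s]
    field_simp
  -- derivative of L02 slice in t1
  have hd02eq : pd1 (L02 n) t1 t2 =
      (-α ^ 2 * (2 * v n t1 t2 * (-α * (v n t1 t2 * v n t1 t2) * (v (n + 1) t1 t2 - v (n - 1) t1 t2)) * (v (n + 1) t1 t2 + v (n - 1) t1 t2)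
        + (v n t1 t2 * v n t1 t2) * ((-α * (v (n + 1) t1 t2 * v (n + 1) t1 t2) * (v (n + 2) t1 t2 - v n t1 t2)) + (-α * (v (n - 1) t1 t2 * v (n - 1) t1 t2) * (v n t1 t2 - v (n - 2) t1 t2))))) * q (n + 1) t1 t2
      + (-α ^ 2 * (v n t1 t2 * v n t1 t2) * (v (n + 1) t1 t2 + v (n - 1) t1 t2)) * (α * v (n + 1) t1 t2 - β)
      - α ^ 2 * ((-α * (v n t1 t2 * v n t1 t2) * (v (n + 1) t1 t2 - v (n - 1) t1 t2)) * v (n + 1) t1 t2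
        + v n t1 t2 * (-α * (v (n + 1) t1 t2 * v (n + 1) t1 t2) * (v (n + 2) t1 t2 - v n t1 t2))) := by
    have hbig := (((((hV1 n t1).mul (hV1 n t1)).const_mul (-α ^ 2)).mul
        ((hV1 (n + 1) t1).add (hV1 (n - 1) t1))).mul (hQ1 (n + 1) t1)).sub
      (((hV1 n t1).mul (hV1 (n + 1) t1)).const_mul (α ^ 2))
    have hfe : (fun x => L02 n x t2)
        = fun x => -α ^ 2 * (v n x t2 * v n x t2) * (v (n + 1) x t2 + v (n - 1) x t2) * q (n + 1) x t2
            - α ^ 2 * (v n x t2 * v (n + 1) x t2) :=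
      funext fun x => by rw [hL02 n x t2, heq2 n x t2]; ring
    show deriv (fun s => L02 n s t2) t1 = _
    rw [hfe]
    refine hbig.deriv.trans ?_
    simp only [show n + 1 + 1 = n + 2 from by ring, show n + 1 - 1 = n from by ring,
      show n - 1 + 1 = n from by ring, show n - 1 - 1 = n - 2 from by ring]
    simp only [Pi.mul_apply, Pi.add_apply]
    ring
  -- derivative of L01 slice in t2
  have hd01eq : pd2 (L01 n) t1 t2 =
      α * (-(v n t1 t2 * v n t1 t2) *
          ((-α ^ 2 * (v (n + 1) t1 t2) ^ 2 * (v (n + 2) t1 t2 + v n t1 t2))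
            - (-α ^ 2 * (v (n - 1) t1 t2) ^ 2 * (v n t1 t2 + v (n - 2) t1 t2)))) * q (n + 1) t1 t2
      + (α * v n t1 t2 - β) * (-α ^ 2 * (v (n + 1) t1 t2) ^ 2 * (v (n + 2) t1 t2 + v n t1 t2))
      - α * (((-α ^ 2 * (v (n + 1) t1 t2) ^ 2 * (v (n + 2) t1 t2 + v n t1 t2))
            - (-α ^ 2 * (v (n - 1) t1 t2) ^ 2 * (v n t1 t2 + v (n - 2) t1 t2))) * v n t1 t2) := by
    have hw := ((hQ2 (n + 1) t2).const_add α).sub (hQ2 (n - 1) t2)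
    have hlog := hw.log (hden n t1 t2)
    have hbig := ((((hV2 n t2).const_mul α).sub_const β).mul (hQ2 (n + 1) t2)).sub
      (hlog.const_mul α)
    have hfe : (fun x => L01 n t1 x)
        = fun x => (α * v n t1 x - β) * q (n + 1) t1 x
            - α * Real.log (α + q (n + 1) t1 x - q (n - 1) t1 x) :=
      funext fun x => by rw [hL01 n t1 x, heq1 n t1 x]
    show deriv (fun s => L01 n t1 s) t2 = _
    rw [hfe]
    refine hbig.deriv.trans ?_
    simp only [show n + 1 + 1 = n + 2 from by ring, show n + 1 - 1 = n from by ring,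
      show n - 1 + 1 = n from by ring, show n - 1 - 1 = n - 2 from by ring]
    rw [hv n t1 t2]
    field_simp
    rfl
  rw [hL12 n t1 t2, hL12 (n - 1) t1 t2, hd02eq, hd01eq]
  simp only [show n - 1 + 1 = n from by ring, show n - 1 + 2 = n + 1 from by ring,
    show n - 1 - 1 = n - 2 from by ring]
  simp only [heq1, heq2]
  simp only [show n + 1 + 1 = n + 2 from by ring, show n + 1 - 1 = n from by ring,
    show n - 1 + 1 = n from by ring, show n - 1 - 1 = n - 2 from by ring,
    show n + 2 + 1 = n + 3 from by ring, show n + 2 - 1 = n + 1 from by ring]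
  ring
end

section
/- Let b : ℤ → ℝ and a : ℤ → ℝ be sequences, and define h₁ = (1/2)b² + a, h₂ = (1/3)b³ + a(b + b̄) (with b̄(n) = b(n+1)). Define Q_i = ∂H_i/∂b and B_i = Δ(a·∂H_i/∂a) where H_i = ∑_k T^k h_i formally, so that Q₁ = b, B₁ = a − a̲, Q₂ = b² + a + a̲, B₂ = a(b+b̄) − a̲(b+b̲). Then the formal Poisson bracket summand B₁Q₂ − Q₁B₂ satisfies ∑_{n=m}^{M} (B₁Q₂ − Q₁B₂)(n) = G(M) − G(m−1) for G = a² − b̄ b a, for all integers m ≤ M. -/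
/-!
The bracket summand is a discrete total derivative: pointwise,
`B₁Q₂ − Q₁B₂ = G − G̲` with `G = a² − b̄ b a`, a polynomial identity in the finitely many shifts
of `a` and `b` involved. Summing over `[m, M]`, the sum telescopes to `G(M) − G(m − 1)`.
-/

open Finset

namespace Int

theorem sum_Icc_sub_sub_one {G : Type*} [AddCommGroup G] (f : ℤ → G) {m n : ℤ} (h : m - 1 ≤ n) :
    ∑ i ∈ Icc m n, (f i - f (i - 1)) = f n - f (m - 1) := by
  induction n, h using Int.leInduction with
  | base => simp
  | succ n hn ih =>
    rw [← insert_Icc_right_eq_Icc_add_one (by omega), sum_insert (by simp), ih,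
      add_sub_cancel_right, sub_add_sub_cancel]

end Int

def todaFlux {R : Type*} [CommRing R] (a b : ℤ → R) (n : ℤ) : R :=
  a n ^ 2 - b (n + 1) * b n * a n

theorem toda_bracket_summand_eq_flux_sub {R : Type*} [CommRing R] (a b : ℤ → R) (n : ℤ) :
    (a n - a (n - 1)) * (b n ^ 2 + a n + a (n - 1))
      - b n * (a n * (b n + b (n + 1)) - a (n - 1) * (b n + b (n - 1)))
      = todaFlux a b n - todaFlux a b (n - 1) := by
  simp only [todaFlux, sub_add_cancel]
  ring

/-- Involution of the first two Toda Hamiltonians in Flaschka variables,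
as an exact telescoping identity: ∑_{n=m}^{M} (B₁Q₂ − Q₁B₂)(n)
= G(M) − G(m−1) with G = a² − b̄ b a. -/
theorem toda_poisson_telescoping (a b : ℤ → ℝ)
    (Q1 B1 Q2 B2 G : ℤ → ℝ)
    (hQ1 : ∀ n, Q1 n = b n)
    (hB1 : ∀ n, B1 n = a n - a (n - 1))
    (hQ2 : ∀ n, Q2 n = (b n) ^ 2 + a n + a (n - 1))
    (hB2 : ∀ n, B2 n
      = a n * (b n + b (n + 1)) - a (n - 1) * (b n + b (n - 1)))
    (hG : ∀ n, G n = (a n) ^ 2 - b (n + 1) * b n * a n) :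
    ∀ m M : ℤ, m ≤ M →
      ∑ n ∈ Finset.Icc m M, (B1 n * Q2 n - Q1 n * B2 n) = G M - G (m - 1) := by
  intro m M hmM
  obtain rfl : G = todaFlux a b := funext hG
  simp only [hQ1, hB1, hQ2, hB2, toda_bracket_summand_eq_flux_sub]
  exact Int.sum_Icc_sub_sub_one _ (by omega)
end
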